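/- Let (X,T) be a topological dynamical system. The following are equivalent: (1) (X,T) is uniquely ergodic; (2) there exists μ ∈ M_T(X) such that for every x ∈ X, V^log_T(x) = {μ}; (3) there exists μ ∈ M_T(X) such that for every x ∈ X, Ṽ^log_T(x) = {μ}. -/

import Mathlib

/-!
Logarithmic averages of a bounded sequence are asymptotically shift invariant: by Abel summation
`∑_{k<n} (a_{k+1} - a_k)/(k+1)` stays bounded while `H_n → ∞`. Hence every measure in `Ṽ^log_T(x)`
is `T`-invariant, and `V^log_T(x) ⊆ Ṽ^log_T(x)` is nonempty by compactness of `M(X)`; this gives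
(1) ⇒ (3) ⇒ (2). Conversely, if `V^log_T(x) = {μ}` for every `x`, compactness of `M(X)` forces
the logarithmic averages of each continuous `f` to converge to `∫ f dμ` at every point, and
integrating these averages against an invariant `ν` (dominated convergence) gives
`∫ f dν = ∫ f dμ`.
-/

open Filter MeasureTheory Topology

/-- The `n`-th harmonic number `H_n = ∑_{k=1}^n 1/k` as a real number. -/
noncomputable def H (n : ℕ) : ℝ := ∑ k ∈ Finset.range n, (1 : ℝ) / (k + 1)

/-- A Borel probability measure `μ` is `T`-invariant if `μ(T⁻¹B) = μ(B)` for every Borel set. -/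
def IsInvariantMeasure {X : Type*} [MetricSpace X] [MeasurableSpace X]
    (T : X → X) (μ : ProbabilityMeasure X) : Prop :=
  ∀ B : Set X, MeasurableSet B → μ (T ⁻¹' B) = μ B

/-- `V^log_T(x)`: all weak* limits of the logarithmic empirical measures
`(1/H_{n_i}) ∑_{k=1}^{n_i} (1/k) δ_{T^{k-1}x}` along strictly increasing sequences `n_i → ∞`. -/
def VTlog {X : Type*} [MetricSpace X] [MeasurableSpace X] (T : X → X) (x : X) :
    Set (ProbabilityMeasure X) :=
  {μ | ∃ n : ℕ → ℕ, StrictMono n ∧ ∀ f : C(X, ℝ),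
    Tendsto (fun i : ℕ =>
        (1 / H (n i)) * ∑ k ∈ Finset.range (n i), (1 / (k + 1 : ℝ)) * f (T^[k] x))
      atTop (𝓝 (∫ y, f y ∂(μ : Measure X)))}

/-- `Ṽ^log_T(x)`: all weak* limits of the window logarithmic empirical measures
`(1/H_{n_i-m_i}) ∑_{k=m_i+1}^{n_i} (1/(k-m_i)) δ_{T^{k-1}x}` with `n_i - m_i → ∞`. -/
def VTtildeLog {X : Type*} [MetricSpace X] [MeasurableSpace X] (T : X → X) (x : X) :
    Set (ProbabilityMeasure X) :=
  {μ | ∃ m n : ℕ → ℕ, (∀ i, m i < n i) ∧ Tendsto (fun i => n i - m i) atTop atTop ∧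
    ∀ f : C(X, ℝ),
      Tendsto (fun i : ℕ => (1 / H (n i - m i)) *
          ∑ j ∈ Finset.range (n i - m i), (1 / (j + 1 : ℝ)) * f (T^[m i + j] x))
        atTop (𝓝 (∫ y, f y ∂(μ : Measure X)))}

open Finset BoundedContinuousFunction

noncomputable def logAverage (a : ℕ → ℝ) (n : ℕ) : ℝ :=
  1 / H n * ∑ k ∈ range n, 1 / (k + 1 : ℝ) * a k

lemma H_pos {n : ℕ} (hn : n ≠ 0) : 0 < H n :=
  sum_pos (fun k _ => by positivity) (nonempty_range_iff.mpr hn)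

lemma H_nonneg (n : ℕ) : 0 ≤ H n :=
  sum_nonneg fun k _ => by positivity

lemma tendsto_H_atTop : Tendsto H atTop atTop :=
  Real.tendsto_sum_range_one_div_nat_succ_atTop

lemma logAverage_const {n : ℕ} (hn : n ≠ 0) (c : ℝ) : logAverage (fun _ => c) n = c := by
  rw [logAverage, ← sum_mul, ← H, ← mul_assoc, one_div_mul_cancel (H_pos hn).ne', one_mul]

lemma logAverage_mono {a b : ℕ → ℝ} (h : ∀ k, a k ≤ b k) (n : ℕ) :
    logAverage a n ≤ logAverage b n := by
  have := H_nonneg n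
  unfold logAverage
  gcongr with k
  exact h k

lemma abs_logAverage_le {a : ℕ → ℝ} {C : ℝ} (ha : ∀ k, |a k| ≤ C) (n : ℕ) :
    |logAverage a n| ≤ C := by
  rcases eq_or_ne n 0 with rfl | hn
  · simpa [logAverage] using (abs_nonneg _).trans (ha 0)
  refine abs_le.mpr ⟨?_, ?_⟩
  · simpa only [logAverage_const hn] using logAverage_mono (fun k => (abs_le.mp (ha k)).1) n
  · simpa only [logAverage_const hn] using logAverage_mono (fun k => (abs_le.mp (ha k)).2) n

/-- Abel summation. -/
lemma sum_range_one_div_succ_mul_sub (a : ℕ → ℝ) (n : ℕ) :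
    ∑ k ∈ range n, 1 / (k + 1 : ℝ) * (a (k + 1) - a k) =
      a n / (n + 1) - a 0 + ∑ k ∈ range n, (1 / (k + 1 : ℝ) - 1 / (k + 2)) * a (k + 1) := by
  induction n with
  | zero => simp
  | succ n ih =>
    rw [sum_range_succ, ih, sum_range_succ]
    push_cast
    field_simp
    ring

lemma abs_sum_range_one_div_succ_mul_sub_le {a : ℕ → ℝ} {C : ℝ} (ha : ∀ k, |a k| ≤ C) (n : ℕ) :
    |∑ k ∈ range n, 1 / (k + 1 : ℝ) * (a (k + 1) - a k)| ≤ 3 * C := by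
  have hC : 0 ≤ C := (abs_nonneg _).trans (ha 0)
  have hlast : |a n / (n + 1)| ≤ C := by
    rw [abs_div, abs_of_pos (by positivity : (0 : ℝ) < n + 1)]
    exact div_le_of_le_mul₀ (by positivity) hC (by nlinarith [ha n, abs_nonneg (a n)])
  have htelescope : ∑ k ∈ range n, (1 / (k + 1 : ℝ) - 1 / (k + 2)) = 1 - 1 / (n + 1) := by
    have := sum_range_sub' (fun k : ℕ => 1 / (k + 1 : ℝ)) n
    push_cast at this
    rw [zero_add, div_one] at this
    rw [← this]
    exact sum_congr rfl fun k _ => by ring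
  have hsum : |∑ k ∈ range n, (1 / (k + 1 : ℝ) - 1 / (k + 2)) * a (k + 1)| ≤ C :=
    calc _ ≤ ∑ k ∈ range n, (1 / (k + 1 : ℝ) - 1 / (k + 2)) * C := by
          refine (abs_sum_le_sum_abs _ _).trans (sum_le_sum fun k _ => ?_)
          have : 1 / (k + 2 : ℝ) ≤ 1 / (k + 1) := by gcongr; linarith
          rw [abs_mul, abs_of_nonneg (sub_nonneg.mpr this)]
          gcongr
          exact ha _
      _ ≤ C := by
          rw [← sum_mul, htelescope]
          nlinarith [(by positivity : (0 : ℝ) ≤ 1 / (n + 1))]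
  rw [sum_range_one_div_succ_mul_sub]
  calc _ ≤ |a n / (n + 1)| + |a 0| +
        |∑ k ∈ range n, (1 / (k + 1 : ℝ) - 1 / (k + 2)) * a (k + 1)| :=
        (abs_add_le _ _).trans (add_le_add_left (abs_sub _ _) _)
    _ ≤ 3 * C := by linarith [ha 0]

lemma abs_logAverage_succ_sub_le {a : ℕ → ℝ} {C : ℝ} (ha : ∀ k, |a k| ≤ C) (n : ℕ) :
    |logAverage (fun k => a (k + 1)) n - logAverage a n| ≤ 3 * C / H n := by
  have := H_nonneg n
  rw [logAverage, logAverage, ← mul_sub, ← sum_sub_distrib, abs_mul, abs_of_nonneg (by positivity),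
    one_div_mul_eq_div]
  simp only [← mul_sub]
  gcongr
  exact abs_sum_range_one_div_succ_mul_sub_le ha n

lemma tendsto_logAverage_succ_sub {ι : Type*} {L : Filter ι} {a : ι → ℕ → ℝ} {C : ℝ}
    (ha : ∀ i k, |a i k| ≤ C) {l : ι → ℕ} (hl : Tendsto l L atTop) :
    Tendsto (fun i => logAverage (fun k => a i (k + 1)) (l i) - logAverage (a i) (l i)) L
      (𝓝 0) :=
  squeeze_zero_norm (fun i => abs_logAverage_succ_sub_le (ha i) (l i))
    (tendsto_const_nhds.div_atTop (tendsto_H_atTop.comp hl))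

lemma integral_logAverage_comp_iterate {Y : Type*} [MeasurableSpace Y] {S : Y → Y}
    {ν : Measure Y} (hS : MeasurePreserving S ν ν) {f : Y → ℝ} (hf : Integrable f ν) {n : ℕ}
    (hn : n ≠ 0) : ∫ y, logAverage (fun k => f (S^[k] y)) n ∂ν = ∫ y, f y ∂ν := by
  have hcomp : ∀ k, ∫ y, f (S^[k] y) ∂ν = ∫ y, f y ∂ν := fun k => by
    have := integral_map (hS.iterate k).measurable.aemeasurable
      (((hS.iterate k).map_eq).symm ▸ hf.aestronglyMeasurable)
    rwa [(hS.iterate k).map_eq, eq_comm] at this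
  simp only [logAverage]
  have hint : ∀ k : ℕ, Integrable (fun y => 1 / (k + 1 : ℝ) * f (S^[k] y)) ν := fun k =>
    ((hS.iterate k).integrable_comp_of_integrable hf).const_mul _
  rw [integral_const_mul, integral_finsetSum _ fun k _ => hint k]
  simp only [integral_const_mul, hcomp]
  exact logAverage_const hn _

section LogEmpiricalMeasure

variable {X : Type*} [MeasurableSpace X]

noncomputable def logEmpiricalMeasure (p : ℕ → X) (n : ℕ) : Measure X :=
  ∑ k ∈ range n, ENNReal.ofReal (1 / H n * (1 / (k + 1))) • Measure.dirac (p k)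

lemma integral_logEmpiricalMeasure [MeasurableSingletonClass X] (p : ℕ → X) (n : ℕ)
    (f : X → ℝ) : ∫ y, f y ∂logEmpiricalMeasure p n = logAverage (f ∘ p) n := by
  have hw : ∀ k : ℕ, 0 ≤ 1 / H n * (1 / (k + 1 : ℝ)) := fun k => by
    have := H_nonneg n; positivity
  rw [logEmpiricalMeasure, integral_finsetSum_measure
    fun k _ => (integrable_dirac (by simp)).smul_measure ENNReal.ofReal_ne_top, logAverage,
    mul_sum]
  refine sum_congr rfl fun k _ => ?_
  rw [integral_smul_measure, integral_dirac, ENNReal.toReal_ofReal (hw k), smul_eq_mul,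
    Function.comp_apply, mul_assoc]

lemma isProbabilityMeasure_logEmpiricalMeasure (p : ℕ → X) {n : ℕ} (hn : n ≠ 0) :
    IsProbabilityMeasure (logEmpiricalMeasure p n) := by
  constructor
  have := H_nonneg n
  simp only [logEmpiricalMeasure, Measure.coe_finsetSum, Finset.sum_apply, Measure.smul_apply,
    measure_univ, smul_eq_mul, mul_one]
  rw [← ENNReal.ofReal_sum_of_nonneg fun k _ => by positivity, ← mul_sum, ← H,
    one_div_mul_cancel (H_pos hn).ne', ENNReal.ofReal_one]

/-- Shifted by one, since `logEmpiricalMeasure p 0 = 0` is not a probability measure. -/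
noncomputable def logEmpiricalProbabilityMeasure (p : ℕ → X) (n : ℕ) : ProbabilityMeasure X :=
  ⟨logEmpiricalMeasure p (n + 1), isProbabilityMeasure_logEmpiricalMeasure p n.succ_ne_zero⟩

lemma tendsto_logAverage_of_tendsto_logEmpiricalProbabilityMeasure [TopologicalSpace X]
    [OpensMeasurableSpace X] [MeasurableSingletonClass X] {p : ℕ → X} {ι : Type*} {L : Filter ι}
    {n : ι → ℕ} {ρ : ProbabilityMeasure X}
    (h : Tendsto (fun i => logEmpiricalProbabilityMeasure p (n i)) L (𝓝 ρ)) (f : X →ᵇ ℝ) :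
    Tendsto (fun i => logAverage (f ∘ p) (n i + 1)) L (𝓝 (∫ y, f y ∂ρ)) := by
  simpa only [logEmpiricalProbabilityMeasure, ProbabilityMeasure.coe_mk,
    integral_logEmpiricalMeasure] using
    ProbabilityMeasure.tendsto_iff_forall_integral_tendsto.mp h f

end LogEmpiricalMeasure

section Invariance

variable {X : Type*} [MetricSpace X] [MeasurableSpace X] {T : X → X} {x : X}

lemma isInvariantMeasure_iff_measurePreserving (hT : Measurable T) (μ : ProbabilityMeasure X) :
    IsInvariantMeasure T μ ↔ MeasurePreserving T μ μ := by
  refine ⟨fun h => ⟨hT, Measure.ext fun B hB => ?_⟩, fun h B hB => ?_⟩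
  · rw [Measure.map_apply hT hB, ← ProbabilityMeasure.ennreal_coeFn_eq_coeFn_toMeasure,
      ← ProbabilityMeasure.ennreal_coeFn_eq_coeFn_toMeasure, h B hB]
  · rw [← ENNReal.coe_inj, ProbabilityMeasure.ennreal_coeFn_eq_coeFn_toMeasure,
      ProbabilityMeasure.ennreal_coeFn_eq_coeFn_toMeasure, ← Measure.map_apply hT hB, h.map_eq]

lemma isInvariantMeasure_of_forall_integral_comp_eq [BorelSpace X] (hT : Continuous T)
    {μ : ProbabilityMeasure X} (h : ∀ f : X →ᵇ ℝ, ∫ y, f (T y) ∂μ = ∫ y, f y ∂μ) :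
    IsInvariantMeasure T μ := by
  refine (isInvariantMeasure_iff_measurePreserving hT.measurable μ).mpr
    ⟨hT.measurable, ext_of_forall_integral_eq_of_IsFiniteMeasure fun f => ?_⟩
  rw [integral_map hT.aemeasurable f.continuous.aestronglyMeasurable, h f]

lemma VTlog_subset_VTtildeLog (T : X → X) (x : X) : VTlog T x ⊆ VTtildeLog T x := by
  rintro ρ ⟨n, hn, hlim⟩
  refine ⟨fun _ => 0, fun i => n (i + 1), fun i => (Nat.zero_le _).trans_lt (hn i.succ_pos), ?_,
    fun f => ?_⟩
  · exact hn.tendsto_atTop.comp (tendsto_add_atTop_nat 1)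
  · simp only [Nat.sub_zero, zero_add]
    exact (hlim f).comp (tendsto_add_atTop_nat 1)

lemma isInvariantMeasure_of_mem_VTtildeLog [BorelSpace X] (hT : Continuous T)
    {ρ : ProbabilityMeasure X} (hρ : ρ ∈ VTtildeLog T x) : IsInvariantMeasure T ρ := by
  obtain ⟨m, n, -, hlen, hlim⟩ := hρ
  refine isInvariantMeasure_of_forall_integral_comp_eq hT fun f => ?_
  have hsub := (hlim (f.toContinuousMap.comp ⟨T, hT⟩)).sub (hlim f.toContinuousMap)
  have hzero := tendsto_logAverage_succ_sub (a := fun i k => f (T^[m i + k] x))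
    (fun i k => by simpa only [Real.norm_eq_abs] using f.norm_coe_le_norm _) hlen
  simp only [← add_assoc, Function.iterate_succ_apply'] at hzero
  exact sub_eq_zero.mp (tendsto_nhds_unique hsub hzero)

end Invariance

section CompactDynamics

variable {X : Type*} [MetricSpace X] [CompactSpace X] [MeasurableSpace X] [BorelSpace X]
  {T : X → X} {x : X}

lemma mem_VTlog_of_mapClusterPt {ρ : ProbabilityMeasure X}
    (hρ : MapClusterPt ρ atTop (logEmpiricalProbabilityMeasure fun k => T^[k] x)) :
    ρ ∈ VTlog T x := by
  obtain ⟨φ, hφ, hlim⟩ := hρ.tendsto_subseq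
  exact ⟨fun i => φ i + 1, fun i j hij => Nat.succ_lt_succ (hφ hij), fun f =>
    tendsto_logAverage_of_tendsto_logEmpiricalProbabilityMeasure hlim (mkOfCompact f)⟩

lemma VTlog_nonempty (T : X → X) (x : X) : (VTlog T x).Nonempty :=
  let ⟨ρ, hρ⟩ := exists_clusterPt_of_compactSpace
    (map (logEmpiricalProbabilityMeasure fun k => T^[k] x) atTop)
  ⟨ρ, mem_VTlog_of_mapClusterPt hρ⟩

lemma tendsto_logAverage_of_VTlog_subset {μ : ProbabilityMeasure X} (h : VTlog T x ⊆ {μ})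
    (f : X →ᵇ ℝ) : Tendsto (logAverage fun k => f (T^[k] x)) atTop (𝓝 (∫ y, f y ∂μ)) := by
  have hlim : Tendsto (logEmpiricalProbabilityMeasure fun k => T^[k] x) atTop (𝓝 μ) :=
    tendsto_nhds_of_unique_mapClusterPt fun ρ hρ => h (mem_VTlog_of_mapClusterPt hρ)
  exact (tendsto_add_atTop_iff_nat 1).mp
    (tendsto_logAverage_of_tendsto_logEmpiricalProbabilityMeasure hlim f)

lemma eq_of_isInvariantMeasure_of_forall_VTlog_subset (hT : Continuous T)
    {μ ν : ProbabilityMeasure X} (h : ∀ x, VTlog T x ⊆ {μ}) (hν : IsInvariantMeasure T ν) :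
    ν = μ := by
  have hS := (isInvariantMeasure_iff_measurePreserving hT.measurable ν).mp hν
  refine ProbabilityMeasure.toMeasure_injective
    (ext_of_forall_integral_eq_of_IsFiniteMeasure fun f => ?_)
  have hcont : ∀ n, Continuous fun y => logAverage (fun k => f (T^[k] y)) n := fun n => by
    unfold logAverage
    fun_prop
  have hdom := tendsto_integral_of_dominated_convergence (μ := (ν : Measure X)) (fun _ => ‖f‖)
    (fun n => (hcont n).aestronglyMeasurable) (integrable_const _)
    (fun n => ae_of_all _ fun y => abs_logAverage_le (fun k => f.norm_coe_le_norm _) n)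
    (ae_of_all _ fun y => tendsto_logAverage_of_VTlog_subset (h y) f)
  rw [integral_const, probReal_univ, one_smul] at hdom
  refine tendsto_nhds_unique (tendsto_const_nhds.congr' ?_) hdom
  filter_upwards [eventually_ne_atTop 0] with n hn
  exact (integral_logAverage_comp_iterate hS (f.integrable _) hn).symm

end CompactDynamics

theorem uniquelyErgodic_iff_VTlog_iff_VTtildeLog_general
    {X : Type*} [MetricSpace X] [CompactSpace X]
    [MeasurableSpace X] [BorelSpace X]
    (T : X → X) (hT : Continuous T) :
    ((∃ μ : ProbabilityMeasure X, {ν : ProbabilityMeasure X | IsInvariantMeasure T ν} = {μ}) ↔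
      (∃ μ : ProbabilityMeasure X, IsInvariantMeasure T μ ∧ ∀ x : X, VTlog T x = {μ})) ∧
    ((∃ μ : ProbabilityMeasure X, {ν : ProbabilityMeasure X | IsInvariantMeasure T ν} = {μ}) ↔
      (∃ μ : ProbabilityMeasure X, IsInvariantMeasure T μ ∧ ∀ x : X, VTtildeLog T x = {μ})) := by
  have ue_to_tilde : (∃ μ : ProbabilityMeasure X, {ν | IsInvariantMeasure T ν} = {μ}) →
      ∃ μ, IsInvariantMeasure T μ ∧ ∀ x, VTtildeLog T x = {μ} := by
    rintro ⟨μ, hμ⟩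
    refine ⟨μ, hμ.ge (Set.mem_singleton μ), fun x => ?_⟩
    exact ((VTlog_nonempty T x).mono (VTlog_subset_VTtildeLog T x)).subset_singleton_iff.mp
      fun ρ hρ => hμ.le (isInvariantMeasure_of_mem_VTtildeLog hT hρ)
  have tilde_to_log : (∃ μ : ProbabilityMeasure X, IsInvariantMeasure T μ ∧
      ∀ x, VTtildeLog T x = {μ}) → ∃ μ, IsInvariantMeasure T μ ∧ ∀ x, VTlog T x = {μ} := by
    rintro ⟨μ, hμ, h⟩
    exact ⟨μ, hμ, fun x => (VTlog_nonempty T x).subset_singleton_iff.mp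
      ((VTlog_subset_VTtildeLog T x).trans (h x).subset)⟩
  have log_to_ue : (∃ μ : ProbabilityMeasure X, IsInvariantMeasure T μ ∧ ∀ x, VTlog T x = {μ}) →
      ∃ μ : ProbabilityMeasure X, {ν | IsInvariantMeasure T ν} = {μ} := by
    rintro ⟨μ, hμ, h⟩
    exact ⟨μ, Set.eq_singleton_iff_unique_mem.mpr ⟨hμ, fun ν hν =>
      eq_of_isInvariantMeasure_of_forall_VTlog_subset hT (fun x => (h x).subset) hν⟩⟩
  exact ⟨⟨tilde_to_log ∘ ue_to_tilde, log_to_ue⟩, ⟨ue_to_tilde, log_to_ue ∘ tilde_to_log⟩⟩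

/-- `(X,T)` is uniquely ergodic if and only if there is a `T`-invariant `μ` with
`V^log_T(x) = {μ}` for every `x`, if and only if there is a `T`-invariant `μ` with
`Ṽ^log_T(x) = {μ}` for every `x`. -/
theorem uniquelyErgodic_iff_VTlog_iff_VTtildeLog
    {X : Type*} [MetricSpace X] [CompactSpace X] [Nonempty X]
    [MeasurableSpace X] [BorelSpace X]
    (T : X → X) (hT : Continuous T) :
    ((∃ μ : ProbabilityMeasure X, {ν : ProbabilityMeasure X | IsInvariantMeasure T ν} = {μ}) ↔
      (∃ μ : ProbabilityMeasure X, IsInvariantMeasure T μ ∧ ∀ x : X, VTlog T x = {μ})) ∧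
    ((∃ μ : ProbabilityMeasure X, {ν : ProbabilityMeasure X | IsInvariantMeasure T ν} = {μ}) ↔
      (∃ μ : ProbabilityMeasure X, IsInvariantMeasure T μ ∧ ∀ x : X, VTtildeLog T x = {μ})) :=
  uniquelyErgodic_iff_VTlog_iff_VTtildeLog_general T hT
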